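/- For independent Bernoulli(p) random variables I₁₂, I₂₃, I₁₃ and V_{12,3} = (2-p)I₁₃I₂₃ − p·max(I₁₃,I₂₃), one has E[V_{12,3}·1{max(I₁₂,I₂₃)=1}] = −E[V_{12,3}·1{max(I₁₂,I₂₃)=0}] = p²(1−p)². -/

import Mathlib

open MeasureTheory ProbabilityTheory Filter
open scoped ENNReal

/-- Three i.i.d. Bernoulli(p) random variables, as a product measure on `Fin 3 → Bool`;
coordinate `0` is `I₁₂`, coordinate `1` is `I₁₃`, coordinate `2` is `I₂₃`. -/
noncomputable def bern3 (p : ℝ≥0∞) (hp : p ≤ 1) : Measure (Fin 3 → Bool) :=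
  Measure.pi fun _ => (PMF.ofFintype (fun b => cond b p (1 - p)) (by simp [hp])).toMeasure

/-- The real-valued indicator of a Boolean. -/
def bInd (b : Bool) : ℝ := if b then 1 else 0

/-- `V_{12,3} = (2-p) I₁₃ I₂₃ − p max(I₁₃, I₂₃)`. -/
noncomputable def V123 (p : ℝ) (ω : Fin 3 → Bool) : ℝ :=
  (2 - p) * bInd (ω 1) * bInd (ω 2) - p * max (bInd (ω 1)) (bInd (ω 2))

/-- `V_{13,2} = (2-p) I₁₂ I₂₃ − p max(I₁₂, I₂₃)`. -/
noncomputable def V132 (p : ℝ) (ω : Fin 3 → Bool) : ℝ :=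
  (2 - p) * bInd (ω 0) * bInd (ω 2) - p * max (bInd (ω 0)) (bInd (ω 2))

/-!
The events `{max(I₁₂, I₂₃) = 1}` and `{max(I₁₂, I₂₃) = 0}` split the sample space, so the first
identity is the statement that `V_{12,3}` has mean zero. On the second event `I₂₃ = 0`, hence
`V_{12,3} = -p I₁₃` there, and independence gives `E[V_{12,3} 1{I₁₂ = I₂₃ = 0}] = -p · p · (1-p)²`.
All expectations are finite sums over the eight outcomes.
-/

instance (p : ℝ≥0∞) (hp : p ≤ 1) : IsProbabilityMeasure (bern3 p hp) := by
  unfold bern3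
  infer_instance

theorem Fin.sum_univ_fun_succ {M α : Type*} [AddCommMonoid M] [Fintype α] {n : ℕ}
    (f : (Fin (n + 1) → α) → M) : ∑ x, f x = ∑ a, ∑ x : Fin n → α, f (Matrix.vecCons a x) := by
  rw [← Fintype.sum_prod_type']
  exact (Fintype.sum_equiv (Fin.consEquiv fun _ => α) _ _ fun _ => rfl).symm

theorem integral_pi_pmf {ι : Type*} [Fintype ι] [DecidableEq ι] {α : ι → Type*}
    [∀ i, Fintype (α i)] [∀ i, MeasurableSpace (α i)] [∀ i, MeasurableSingletonClass (α i)]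
    (P : ∀ i, PMF (α i)) (f : (∀ i, α i) → ℝ) :
    ∫ x, f x ∂Measure.pi (fun i => (P i).toMeasure) = ∑ x, (∏ i, (P i (x i)).toReal) * f x := by
  rw [integral_fintype .of_finite]
  refine Finset.sum_congr rfl fun x _ => ?_
  rw [smul_eq_mul, measureReal_def, ← Set.univ_pi_singleton, Measure.pi_pi, ENNReal.toReal_prod]
  simp_rw [PMF.toMeasure_apply_singleton _ _ (measurableSet_singleton _)]

theorem integral_bern3 {p : ℝ} (hp : p ∈ Set.Icc (0 : ℝ) 1) (f : (Fin 3 → Bool) → ℝ) :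
    ∫ ω, f ω ∂bern3 (ENNReal.ofReal p) (ENNReal.ofReal_le_one.mpr hp.2)
      = ∑ ω, (∏ i, cond (ω i) p (1 - p)) * f ω := by
  rw [bern3, integral_pi_pmf]
  congr! 3 with ω - i
  cases ω i
  · simp [ENNReal.toReal_sub_of_le (ENNReal.ofReal_le_one.mpr hp.2), hp.1]
  · simp [hp.1]

theorem integral_V123 {p : ℝ} (hp : p ∈ Set.Icc (0 : ℝ) 1) :
    ∫ ω, V123 p ω ∂bern3 (ENNReal.ofReal p) (ENNReal.ofReal_le_one.mpr hp.2) = 0 := by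
  rw [integral_bern3 hp]
  simp [Fin.sum_univ_fun_succ, Fin.prod_univ_succ, V123, bInd]
  ring

theorem integral_V123_mul_indicator_false {p : ℝ} (hp : p ∈ Set.Icc (0 : ℝ) 1) :
    ∫ ω, V123 p ω * (if (ω 0 || ω 2) = false then (1 : ℝ) else 0)
        ∂bern3 (ENNReal.ofReal p) (ENNReal.ofReal_le_one.mpr hp.2) = -(p ^ 2 * (1 - p) ^ 2) := by
  rw [integral_bern3 hp]
  simp [Fin.sum_univ_fun_succ, Fin.prod_univ_succ, V123, bInd]
  ring

/-- For mutually independent Bernoulli(p) indicators `I₁₂, I₁₃, I₂₃` and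
`V_{12,3} = (2-p) I₁₃ I₂₃ − p max(I₁₃, I₂₃)`, one has
`E[V_{12,3} 1{max(I₁₂,I₂₃)=1}] = −E[V_{12,3} 1{max(I₁₂,I₂₃)=0}] = p²(1−p)²`. -/
theorem expectation_V123_indicator (p : ℝ) (hp : p ∈ Set.Icc (0 : ℝ) 1) :
    (∫ ω, V123 p ω * (if (ω 0 || ω 2) = true then (1 : ℝ) else 0)
        ∂(bern3 (ENNReal.ofReal p) (ENNReal.ofReal_le_one.mpr hp.2))
      = -∫ ω, V123 p ω * (if (ω 0 || ω 2) = false then (1 : ℝ) else 0)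
          ∂(bern3 (ENNReal.ofReal p) (ENNReal.ofReal_le_one.mpr hp.2))) ∧
    (∫ ω, V123 p ω * (if (ω 0 || ω 2) = true then (1 : ℝ) else 0)
        ∂(bern3 (ENNReal.ofReal p) (ENNReal.ofReal_le_one.mpr hp.2))
      = p ^ 2 * (1 - p) ^ 2) := by
  set μ := bern3 (ENNReal.ofReal p) (ENNReal.ofReal_le_one.mpr hp.2)
  have hsum : (∫ ω, V123 p ω * (if (ω 0 || ω 2) = true then (1 : ℝ) else 0) ∂μ)
      + ∫ ω, V123 p ω * (if (ω 0 || ω 2) = false then (1 : ℝ) else 0) ∂μ = 0 := by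
    rw [← integral_add .of_finite .of_finite]
    convert integral_V123 hp using 1
    congr 1 with ω
    cases ω 0 || ω 2 <;> simp
  have hfalse := integral_V123_mul_indicator_false hp
  constructor <;> linarith
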